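/- Two players with v₂ ≥ v₁ > 0, budgets B₁ ≥ B₂ > 0, B'₁ = B₂·e^{B₁/B₂ - 1}. The closed-form allocation of the clinching auction is: x(s) = (0, s) for s·v₁ ≤ B₂; x(s) = (s - B₂/v₁, B₂/v₁) for B₂ ≤ s·v₁ ≤ B'₁; and x(s) = (s - (sB₂/(2B'₁))·(1 + (B'₁/(s v₁))²), (sB₂/(2B'₁))·(1 + (B'₁/(s v₁))²)) for s·v₁ ≥ B'₁. Then both coordinates x₁(s) and x₂(s) are monotone non-decreasing in s on (0, ∞). -/

import Mathlib

/-!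
In the regime `s v₁ ≥ B₁'` the second share `x₂` satisfies
`x₂ t - x₂ s = (t - s) · B₂ / (2 B₁') · (1 - B₁'² / (s t v₁²))`, and the last factor lies in
`[0, 1]` because `s v₁, t v₁ ≥ B₁'`; since `B₂ ≤ B₁'`, the slope of `x₂` is in `[0, 1/2]`, so both
`x₂` and `x₁ = s - x₂` increase there. In the other two regimes the shares are constant or
`s - const`, and the three formulas agree at the breakpoints `B₂ / v₁` and `B₁' / v₁`.
-/

open Set

theorem MonotoneOn.ite_Ioc_Icc_Ici {α β : Type*} [LinearOrder α] [Preorder β]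
    {f₁ f₂ f₃ : α → β} {a c d : α} (hac : a < c) (hcd : c ≤ d)
    (h₁ : MonotoneOn f₁ (Ioc a c)) (h₂ : MonotoneOn f₂ (Icc c d)) (h₃ : MonotoneOn f₃ (Ici d))
    (hc : f₁ c = f₂ c) (hd : f₂ d = f₃ d) :
    MonotoneOn (fun s => if s ≤ c then f₁ s else if s ≤ d then f₂ s else f₃ s) (Ioi a) := by
  set F := fun s => if s ≤ c then f₁ s else if s ≤ d then f₂ s else f₃ s
  have hF₁ : MonotoneOn F (Ioc a c) := h₁.congr fun s hs => by simp [F, hs.2]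
  have hF₂ : MonotoneOn F (Icc c d) := h₂.congr fun s hs => by
    rcases hs.1.eq_or_lt with rfl | hcs
    · simp [F, hc]
    · simp [F, not_le.mpr hcs, hs.2]
  have hF₃ : MonotoneOn F (Ici d) := h₃.congr fun s hs => by
    rcases (mem_Ici.mp hs).eq_or_lt with rfl | hds
    · rcases hcd.eq_or_lt with rfl | hcd'
      · simp [F, hc, hd]
      · simp [F, not_le.mpr hcd', hd]
    · simp [F, not_le.mpr hds, not_le.mpr (hcd.trans_lt hds)]
  have hF₁₂ : MonotoneOn F (Ioc a d) := by
    simpa only [Ioc_union_Icc_eq_Ioc hac hcd] using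
      hF₁.union_right hF₂ (isGreatest_Ioc hac) (isLeast_Icc hcd)
  simpa only [Ioc_union_Ici_eq_Ioi (hac.trans_le hcd)] using
    hF₁₂.union_right hF₃ (isGreatest_Ioc (hac.trans_le hcd)) isLeast_Ici

theorem le_mul_exp_div_sub_one {a b : ℝ} (hb : 0 < b) (hba : b ≤ a) :
    b ≤ b * Real.exp (a / b - 1) := by
  have : 1 ≤ Real.exp (a / b - 1) := Real.one_le_exp (by linarith [(one_le_div hb).mpr hba])
  nlinarith

namespace Clinching

/-- The second bidder's allocation for `s v ≥ P`, where `b = B₂`, `P = B₁'` and `v = v₁`. -/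
noncomputable def highShare (b P v s : ℝ) : ℝ := s * b / (2 * P) * (1 + (P / (s * v)) ^ 2)

variable {b P v : ℝ}

theorem highShare_breakpoint (hP : P ≠ 0) (hv : v ≠ 0) : highShare b P v (P / v) = b / v := by
  unfold highShare
  field_simp
  ring

theorem highShare_sub_highShare {s t : ℝ} (hP : P ≠ 0) (hv : v ≠ 0) (hs : s ≠ 0) (ht : t ≠ 0) :
    highShare b P v t - highShare b P v s =
      (t - s) * (b / (2 * P)) * (1 - P ^ 2 / (s * t * v ^ 2)) := by
  unfold highShare
  field_simp
  ring

theorem sq_div_le_one_of_div_le (hP : 0 < P) (hv : 0 < v) {s t : ℝ} (hs : P / v ≤ s)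
    (hst : s ≤ t) : P ^ 2 / (s * t * v ^ 2) ≤ 1 := by
  have hsv : P ≤ s * v := (div_le_iff₀ hv).mp hs
  have htv : P ≤ t * v := hsv.trans (mul_le_mul_of_nonneg_right hst hv.le)
  rw [div_le_one (by nlinarith)]
  nlinarith

theorem monotoneOn_highShare (hb : 0 ≤ b) (hP : 0 < P) (hv : 0 < v) :
    MonotoneOn (highShare b P v) (Ici (P / v)) := by
  intro s hs t _ hst
  have hs₀ : 0 < s := (div_pos hP hv).trans_le hs
  have hq := sq_div_le_one_of_div_le hP hv hs hst
  rw [← sub_nonneg, highShare_sub_highShare hP.ne' hv.ne' hs₀.ne' (hs₀.trans_le hst).ne']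
  have : 0 ≤ b / (2 * P) := by positivity
  exact mul_nonneg (mul_nonneg (sub_nonneg.mpr hst) this) (sub_nonneg.mpr hq)

theorem monotoneOn_sub_highShare (hb : b ≤ 2 * P) (hP : 0 < P) (hv : 0 < v) :
    MonotoneOn (fun s => s - highShare b P v s) (Ici (P / v)) := by
  intro s hs t _ hst
  have hs₀ : 0 < s := (div_pos hP hv).trans_le hs
  have hq := sq_div_le_one_of_div_le hP hv hs hst
  have hq₀ : 0 ≤ P ^ 2 / (s * t * v ^ 2) := by
    have : 0 < t := hs₀.trans_le hst
    positivity
  have hslope : b / (2 * P) ≤ 1 := (div_le_one (by positivity)).mpr hb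
  have hdiff := highShare_sub_highShare (b := b) hP.ne' hv.ne' hs₀.ne' (hs₀.trans_le hst).ne'
  dsimp only
  nlinarith [mul_nonneg (sub_nonneg.mpr hslope) (sub_nonneg.mpr hq), sub_nonneg.mpr hst]

end Clinching

open Clinching in
theorem allocation_monotone_two_players_general (v₁ B₁ B₂ : ℝ)
    (hv₁ : 0 < v₁) (hB : B₁ ≥ B₂) (hB₂ : 0 < B₂)
    (B₁' : ℝ) (hB₁' : B₁' = B₂ * Real.exp (B₁ / B₂ - 1))
    (x₁ x₂ : ℝ → ℝ)
    (hx₁ : ∀ s, x₁ s =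
      if s * v₁ ≤ B₂ then 0
      else if s * v₁ ≤ B₁' then s - B₂ / v₁
      else s - (s * B₂ / (2 * B₁')) * (1 + (B₁' / (s * v₁)) ^ 2))
    (hx₂ : ∀ s, x₂ s =
      if s * v₁ ≤ B₂ then s
      else if s * v₁ ≤ B₁' then B₂ / v₁
      else (s * B₂ / (2 * B₁')) * (1 + (B₁' / (s * v₁)) ^ 2)) :
    MonotoneOn x₁ (Set.Ioi 0) ∧ MonotoneOn x₂ (Set.Ioi 0) := by
  have hBB' : B₂ ≤ B₁' := hB₁' ▸ le_mul_exp_div_sub_one hB₂ hB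
  have hP : 0 < B₁' := hB₂.trans_le hBB'
  have hc : 0 < B₂ / v₁ := div_pos hB₂ hv₁
  have hcd : B₂ / v₁ ≤ B₁' / v₁ := div_le_div_of_nonneg_right hBB' hv₁.le
  have hd : highShare B₂ B₁' v₁ (B₁' / v₁) = B₂ / v₁ := highShare_breakpoint hP.ne' hv₁.ne'
  have hx₁' : x₁ = fun s => if s ≤ B₂ / v₁ then 0 else if s ≤ B₁' / v₁ then s - B₂ / v₁
      else s - highShare B₂ B₁' v₁ s := by
    funext s
    simp only [hx₁, le_div_iff₀ hv₁, highShare]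
  have hx₂' : x₂ = fun s => if s ≤ B₂ / v₁ then s else if s ≤ B₁' / v₁ then B₂ / v₁
      else highShare B₂ B₁' v₁ s := by
    funext s
    simp only [hx₂, le_div_iff₀ hv₁, highShare]
  constructor
  · rw [hx₁']
    exact MonotoneOn.ite_Ioc_Icc_Ici hc hcd monotoneOn_const
      (fun _ _ _ _ h => sub_le_sub_right h _) (monotoneOn_sub_highShare (by linarith) hP hv₁)
      (sub_self _).symm (by rw [hd])
  · rw [hx₂']
    exact MonotoneOn.ite_Ioc_Icc_Ici hc hcd (monotone_id.monotoneOn _) monotoneOn_const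
      (monotoneOn_highShare hB₂.le hP hv₁) rfl hd.symm

theorem allocation_monotone_two_players (v₁ v₂ B₁ B₂ : ℝ)
    (hv : v₂ ≥ v₁) (hv₁ : 0 < v₁) (hB : B₁ ≥ B₂) (hB₂ : 0 < B₂)
    (B₁' : ℝ) (hB₁' : B₁' = B₂ * Real.exp (B₁ / B₂ - 1))
    (x₁ x₂ : ℝ → ℝ)
    (hx₁ : ∀ s, x₁ s =
      if s * v₁ ≤ B₂ then 0
      else if s * v₁ ≤ B₁' then s - B₂ / v₁
      else s - (s * B₂ / (2 * B₁')) * (1 + (B₁' / (s * v₁)) ^ 2))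
    (hx₂ : ∀ s, x₂ s =
      if s * v₁ ≤ B₂ then s
      else if s * v₁ ≤ B₁' then B₂ / v₁
      else (s * B₂ / (2 * B₁')) * (1 + (B₁' / (s * v₁)) ^ 2)) :
    MonotoneOn x₁ (Set.Ioi 0) ∧ MonotoneOn x₂ (Set.Ioi 0) :=
  allocation_monotone_two_players_general v₁ B₁ B₂ hv₁ hB hB₂ B₁' hB₁' x₁ x₂ hx₁ hx₂
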